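/- arXiv:2601.07452 — 3 statements merged into one kernel-verified Lean document; each statement's English description precedes it below -/
import Mathlib

section
/- Let K = 3, v_1 = 1, v_2 = 2, v_3 = 3, and x* = (1/2, 1/3, 1/6). Let σ be the segmentation with σ((1/2, 1/6, 1/3)) = 1/4, σ((1/2, 1/2, 0)) = 1/4, σ((1/2, 1/3, 1/6)) = 1/2, and let φ be the pricing rule charging price 1 with probability one in markets (1/2, 1/6, 1/3) and (1/2, 1/2, 0), and price 2 with probability one in market (1/2, 1/3, 1/6) (this φ is optimal for σ). Then there is no direct segmentation that, with its direct pricing rule, induces the same joint distribution over valuations and prices as (σ, φ). -/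
open Finset

/-- A market: a probability vector over the `K` valuations. -/
def IsMarket (K : ℕ) (x : Fin K → ℝ) : Prop :=
  (∀ j, 0 ≤ x j) ∧ ∑ j, x j = 1

/-- Revenue from charging price `v k` in market `x`. -/
def rev {K : ℕ} (v x : Fin K → ℝ) (k : Fin K) : ℝ :=
  v k * ∑ j ∈ Finset.Ici k, x j

/-- Price `v k` is optimal for market `x`. -/
def OptPrice {K : ℕ} (v x : Fin K → ℝ) (k : Fin K) : Prop :=
  ∀ i, rev v x i ≤ rev v x k

/-- A segmentation of the aggregate market `xstar`: a finitely supported probability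
distribution on markets averaging to `xstar`. -/
def IsSegmentation {K : ℕ} (xstar : Fin K → ℝ) (σ : (Fin K → ℝ) →₀ ℝ) : Prop :=
  (∀ x, 0 ≤ σ x) ∧ (∑ x ∈ σ.support, σ x = 1) ∧
  (∀ x ∈ σ.support, IsMarket K x) ∧
  (∑ x ∈ σ.support, σ x • x = xstar)

/-- A pricing rule assigns a probability vector over prices to each market in the support. -/
def IsPricingRule {K : ℕ} (σ : (Fin K → ℝ) →₀ ℝ) (φ : (Fin K → ℝ) → Fin K → ℝ) : Prop :=
  ∀ x ∈ σ.support, (∀ k, 0 ≤ φ x k) ∧ ∑ k, φ x k = 1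

/-- A pricing rule is optimal if it only charges optimal prices. -/
def IsOptimalPricing {K : ℕ} (v : Fin K → ℝ) (σ : (Fin K → ℝ) →₀ ℝ)
    (φ : (Fin K → ℝ) → Fin K → ℝ) : Prop :=
  ∀ x ∈ σ.support, ∀ k, 0 < φ x k → OptPrice v x k

/-- Consumer surplus of a segmentation and pricing rule. -/
def consumerSurplus {K : ℕ} (v : Fin K → ℝ) (σ : (Fin K → ℝ) →₀ ℝ)
    (φ : (Fin K → ℝ) → Fin K → ℝ) : ℝ :=
  ∑ x ∈ σ.support, σ x * ∑ k, φ x k * ∑ j ∈ Finset.Ici k, (v j - v k) * x j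

/-- Producer surplus of a segmentation and pricing rule. -/
def producerSurplus {K : ℕ} (v : Fin K → ℝ) (σ : (Fin K → ℝ) →₀ ℝ)
    (φ : (Fin K → ℝ) → Fin K → ℝ) : ℝ :=
  ∑ x ∈ σ.support, σ x * ∑ k, φ x k * (v k * ∑ j ∈ Finset.Ici k, x j)

/-- A direct segmentation: markets `xs k` for `k ∈ A`, pairwise distinct, with
`xs k ∈ X_k`, weights `w k > 0` summing to one and averaging to `xstar`. -/
def IsDirectSeg {K : ℕ} (v xstar : Fin K → ℝ) (A : Finset (Fin K))
    (xs : Fin K → Fin K → ℝ) (w : Fin K → ℝ) : Prop :=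
  Set.InjOn xs (A : Set (Fin K)) ∧
  (∀ k ∈ A, IsMarket K (xs k)) ∧
  (∀ k ∈ A, OptPrice v (xs k) k) ∧
  (∀ k ∈ A, 0 < w k) ∧
  (∑ k ∈ A, w k = 1) ∧
  (∑ k ∈ A, w k • xs k = xstar)

/-- Consumer surplus of a direct segmentation (with its direct pricing rule). -/
def directCS {K : ℕ} (v : Fin K → ℝ) (A : Finset (Fin K))
    (xs : Fin K → Fin K → ℝ) (w : Fin K → ℝ) : ℝ :=
  ∑ k ∈ A, w k * ∑ j ∈ Finset.Ici k, (v j - v k) * xs k j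

/-- Producer surplus of a direct segmentation (with its direct pricing rule). -/
def directPS {K : ℕ} (v : Fin K → ℝ) (A : Finset (Fin K))
    (xs : Fin K → Fin K → ℝ) (w : Fin K → ℝ) : ℝ :=
  ∑ k ∈ A, w k * (v k * ∑ j ∈ Finset.Ici k, xs k j)

/-- `x` is the characteristic market `x^S`: supported in `S`, and every price in `S`
yields the same revenue. -/
def IsCharMarket {K : ℕ} (v : Fin K → ℝ) (S : Finset (Fin K)) (x : Fin K → ℝ) : Prop :=
  IsMarket K x ∧ (∀ j ∉ S, x j = 0) ∧ ∀ i ∈ S, ∀ i' ∈ S, rev v x i = rev v x i'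

/-- The joint distribution over valuations and prices induced by `(σ, φ)`:
mass of the pair `(v j, v k)`. -/
def jointDist {K : ℕ} (σ : (Fin K → ℝ) →₀ ℝ) (φ : (Fin K → ℝ) → Fin K → ℝ)
    (j k : Fin K) : ℝ :=
  ∑ x ∈ σ.support, σ x * φ x k * x j

/-- The joint distribution over valuations and prices induced by a direct segmentation
with its direct pricing rule. -/
def directJoint {K : ℕ} (A : Finset (Fin K)) (xs : Fin K → Fin K → ℝ) (w : Fin K → ℝ)
    (j k : Fin K) : ℝ :=
  if k ∈ A then w k * xs k j else 0

/-- The total mass `m_k` of price `v k` under `(σ, φ)`. -/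
noncomputable def mass {K : ℕ} (σ : (Fin K → ℝ) →₀ ℝ) (φ : (Fin K → ℝ) → Fin K → ℝ)
    (k : Fin K) : ℝ :=
  ∑ x ∈ σ.support, σ x * φ x k

/-- The conditional market `x^k` given price `v k` under `(σ, φ)`. -/
noncomputable def condMarket {K : ℕ} (σ : (Fin K → ℝ) →₀ ℝ) (φ : (Fin K → ℝ) → Fin K → ℝ)
    (k : Fin K) : Fin K → ℝ :=
  (mass σ φ k)⁻¹ • ∑ x ∈ σ.support, (σ x * φ x k) • x

/-!
Under `(σ, φ)` the consumers facing price 1 form the vector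
`1/4 • (1/2, 1/6, 1/3) + 1/4 • (1/2, 1/2, 0) = (1/4, 1/6, 1/12)`, and those facing price 2 form
`1/2 • (1/2, 1/3, 1/6)`, the same vector. Under a direct segmentation these are `w k • x^k`, so
both prices would be charged in the same market `x^1 = x^2 = (1/2, 1/3, 1/6)`, contradicting
distinctness of the markets of a direct segmentation.
-/

section DirectSegmentation

variable {K : ℕ} {v xstar : Fin K → ℝ} {A : Finset (Fin K)} {xs : Fin K → Fin K → ℝ}
  {w : Fin K → ℝ}

theorem mem_of_directJoint_ne_zero {j k : Fin K} (h : directJoint A xs w j k ≠ 0) : k ∈ A := by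
  by_contra hk
  exact h (if_neg hk)

theorem sum_directJoint_of_mem {k : Fin K} (hk : k ∈ A) (hx : IsMarket K (xs k)) :
    ∑ j, directJoint A xs w j k = w k := by
  simp only [directJoint, if_pos hk, ← Finset.mul_sum, hx.2, mul_one]

/-- Column `k` of the joint distribution is `w k • xs k` and `xs k` sums to one, so the column
determines the market `xs k`; injectivity of `xs` then separates the prices. -/
theorem IsDirectSeg.eq_of_directJoint_col_eq (hseg : IsDirectSeg v xstar A xs w)
    {k k' : Fin K} {j₀ : Fin K} (hne : directJoint A xs w j₀ k ≠ 0)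
    (hcol : ∀ j, directJoint A xs w j k = directJoint A xs w j k') : k = k' := by
  obtain ⟨hinj, hmkt, -, hw, -, -⟩ := hseg
  have hk : k ∈ A := mem_of_directJoint_ne_zero hne
  have hk' : k' ∈ A := mem_of_directJoint_ne_zero (hcol j₀ ▸ hne)
  have hwk : w k = w k' := by
    rw [← sum_directJoint_of_mem (w := w) hk (hmkt k hk),
      ← sum_directJoint_of_mem (w := w) hk' (hmkt k' hk')]
    exact Finset.sum_congr rfl fun j _ => hcol j
  refine hinj hk hk' (funext fun j => ?_)
  have h := hcol j
  simp only [directJoint, if_pos hk, if_pos hk', hwk] at h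
  exact mul_left_cancel₀ (hw k' hk').ne' h

end DirectSegmentation

section JointDist

variable {K : ℕ} (φ : (Fin K → ℝ) → Fin K → ℝ) (j k : Fin K)

theorem jointDist_add (σ τ : (Fin K → ℝ) →₀ ℝ) :
    jointDist (σ + τ) φ j k = jointDist σ φ j k + jointDist τ φ j k :=
  Finsupp.sum_add_index' (h := fun x r => r * φ x k * x j)
    (fun _ => by simp only [zero_mul]) (fun _ _ _ => by simp only [add_mul])

theorem jointDist_single (x : Fin K → ℝ) (r : ℝ) :
    jointDist (Finsupp.single x r) φ j k = r * φ x k * x j :=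
  Finsupp.sum_single_index (h := fun x r => r * φ x k * x j) (by simp only [zero_mul])

end JointDist

theorem stmt12 :
    ¬ ∃ (A : Finset (Fin 3)) (xs : Fin 3 → Fin 3 → ℝ) (w : Fin 3 → ℝ),
        IsDirectSeg (![1, 2, 3]) (![1/2, 1/3, 1/6]) A xs w ∧
        ∀ j k, directJoint A xs w j k =
          jointDist
            (Finsupp.single (![1/2, 1/6, 1/3] : Fin 3 → ℝ) (1/4 : ℝ)
              + Finsupp.single (![1/2, 1/2, 0] : Fin 3 → ℝ) (1/4 : ℝ)
              + Finsupp.single (![1/2, 1/3, 1/6] : Fin 3 → ℝ) (1/2 : ℝ))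
            (fun x => if x = ![1/2, 1/3, 1/6] then ![0, 1, 0] else ![1, 0, 0]) j k := by
  rintro ⟨A, xs, w, hseg, hjoint⟩
  simp only [jointDist_add, jointDist_single] at hjoint
  have hcol : ∀ j, directJoint A xs w j 0 = directJoint A xs w j 1 := by
    intro j
    rw [hjoint, hjoint]
    fin_cases j <;> norm_num
  have hne : directJoint A xs w 0 0 ≠ 0 := by
    rw [hjoint]; norm_num
  exact absurd (hseg.eq_of_directJoint_col_eq hne hcol) (by decide)
end

section
/- Let σ be a segmentation and φ an optimal pricing rule for σ. For each k ∈ {1,…,K} with m_k := ∑_{x ∈ supp σ} σ(x) φ_k(x) > 0, define x^k := (1/m_k) ∑_{x ∈ supp σ} σ(x) φ_k(x) · x. If a direct segmentation σ' supported on markets {y^k}_{k ∈ A} (with its direct pricing rule) induces the same joint distribution over valuations and prices as (σ, φ), then A = {k : m_k > 0}, and for every k ∈ A one has σ'(y^k) = m_k and y^k = x^k. Consequently, if the x^k (over k with m_k > 0) are not pairwise distinct, then no direct segmentation induces the same joint distribution over valuations and prices as (σ, φ). -/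
open Finset

/-! Summing the joint distribution over valuations recovers the mass of each price, so a direct
segmentation with the same joint distribution must put weight `m_k` on price `v k`; dividing the
`k`-th column of the joint distribution by `m_k` then recovers its market `y^k = x^k`. -/

section JointDistribution

variable {K : ℕ} (σ : (Fin K → ℝ) →₀ ℝ) (φ : (Fin K → ℝ) → Fin K → ℝ)

theorem sum_jointDist (hσ : ∀ x ∈ σ.support, IsMarket K x) (k : Fin K) :
    ∑ j, jointDist σ φ j k = mass σ φ k := by
  unfold jointDist mass
  rw [Finset.sum_comm]
  refine Finset.sum_congr rfl fun x hx => ?_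
  rw [← Finset.mul_sum, (hσ x hx).2, mul_one]

theorem condMarket_apply (k j : Fin K) :
    condMarket σ φ k j = (mass σ φ k)⁻¹ * jointDist σ φ j k := by
  simp only [condMarket, jointDist, Pi.smul_apply, smul_eq_mul, Finset.sum_apply]

theorem sum_directJoint {A : Finset (Fin K)} {ys : Fin K → Fin K → ℝ} (w : Fin K → ℝ)
    (hys : ∀ k ∈ A, IsMarket K (ys k)) (k : Fin K) :
    ∑ j, directJoint A ys w j k = if k ∈ A then w k else 0 := by
  by_cases hk : k ∈ A
  · simp only [directJoint, hk, if_true, ← Finset.mul_sum, (hys k hk).2, mul_one]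
  · simp [directJoint, hk]

variable {σ φ}

theorem weight_and_market_of_directJoint_eq (hσ : ∀ x ∈ σ.support, IsMarket K x)
    {A : Finset (Fin K)} {ys : Fin K → Fin K → ℝ} {w : Fin K → ℝ}
    (hys : ∀ k ∈ A, IsMarket K (ys k)) (hw : ∀ k ∈ A, 0 < w k)
    (hjoint : ∀ j k, directJoint A ys w j k = jointDist σ φ j k) :
    A = (Finset.univ.filter fun k => 0 < mass σ φ k) ∧
      ∀ k ∈ A, w k = mass σ φ k ∧ ys k = condMarket σ φ k := by
  have hmass (k : Fin K) : (if k ∈ A then w k else 0) = mass σ φ k := by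
    rw [← sum_directJoint w hys, ← sum_jointDist σ φ hσ]
    exact Finset.sum_congr rfl fun j _ => hjoint j k
  have hweight : ∀ k ∈ A, w k = mass σ φ k := fun k hk => by
    simpa [hk] using hmass k
  refine ⟨?_, fun k hk => ⟨hweight k hk, ?_⟩⟩
  · ext k
    simp only [Finset.mem_filter, Finset.mem_univ, true_and]
    by_cases hk : k ∈ A
    · simpa [hk, ← hweight k hk] using hw k hk
    · simp [hk, ← hmass k]
  · have hpos : mass σ φ k ≠ 0 := (hweight k hk ▸ hw k hk).ne'
    funext j
    have hcol : w k * ys k j = jointDist σ φ j k := by simpa [directJoint, hk] using hjoint j k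
    rw [condMarket_apply, ← hcol, hweight k hk, inv_mul_cancel_left₀ hpos]

theorem condMarket_injOn_of_directJoint_eq (hσ : ∀ x ∈ σ.support, IsMarket K x)
    {v xstar : Fin K → ℝ} {A : Finset (Fin K)} {ys : Fin K → Fin K → ℝ} {w : Fin K → ℝ}
    (hdirect : IsDirectSeg v xstar A ys w)
    (hjoint : ∀ j k, directJoint A ys w j k = jointDist σ φ j k) :
    Set.InjOn (condMarket σ φ) {k : Fin K | 0 < mass σ φ k} := by
  obtain ⟨hinj, hys, -, hw, -⟩ := hdirect
  obtain ⟨hA, hmarket⟩ := weight_and_market_of_directJoint_eq hσ hys hw hjoint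
  have hmemA {k : Fin K} (hk : 0 < mass σ φ k) : k ∈ A := by simpa [hA] using hk
  intro a ha b hb hab
  exact hinj (hmemA ha) (hmemA hb) (by rw [(hmarket a (hmemA ha)).2, (hmarket b (hmemA hb)).2, hab])

end JointDistribution

theorem stmt14_general {K : ℕ} (v : Fin K → ℝ)
    (xstar : Fin K → ℝ)
    (σ : (Fin K → ℝ) →₀ ℝ) (φ : (Fin K → ℝ) → Fin K → ℝ)
    (hσ : IsSegmentation xstar σ) :
    (∀ (A : Finset (Fin K)) (ys : Fin K → Fin K → ℝ) (w : Fin K → ℝ),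
        IsDirectSeg v xstar A ys w →
        (∀ j k, directJoint A ys w j k = jointDist σ φ j k) →
        A = (Finset.univ.filter fun k => 0 < mass σ φ k) ∧
          ∀ k ∈ A, w k = mass σ φ k ∧ ys k = condMarket σ φ k) ∧
      (¬ Set.InjOn (condMarket σ φ) {k : Fin K | 0 < mass σ φ k} →
        ¬ ∃ (A : Finset (Fin K)) (ys : Fin K → Fin K → ℝ) (w : Fin K → ℝ),
            IsDirectSeg v xstar A ys w ∧
            ∀ j k, directJoint A ys w j k = jointDist σ φ j k) := by
  have hmarkets := hσ.2.2.1
  refine ⟨fun A ys w hdirect hjoint => ?_, ?_⟩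
  · exact weight_and_market_of_directJoint_eq hmarkets hdirect.2.1 hdirect.2.2.2.1 hjoint
  · rintro hnotinj ⟨A, ys, w, hdirect, hjoint⟩
    exact hnotinj (condMarket_injOn_of_directJoint_eq hmarkets hdirect hjoint)

theorem stmt14 {K : ℕ} (hK : 2 ≤ K) (v : Fin K → ℝ)
    (hv0 : ∀ k, 0 < v k) (hv : StrictMono v)
    (xstar : Fin K → ℝ) (hxstar : IsMarket K xstar) (hxpos : ∀ k, 0 < xstar k)
    (σ : (Fin K → ℝ) →₀ ℝ) (φ : (Fin K → ℝ) → Fin K → ℝ)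
    (hσ : IsSegmentation xstar σ) (hφ : IsPricingRule σ φ)
    (hopt : IsOptimalPricing v σ φ) :
    (∀ (A : Finset (Fin K)) (ys : Fin K → Fin K → ℝ) (w : Fin K → ℝ),
        IsDirectSeg v xstar A ys w →
        (∀ j k, directJoint A ys w j k = jointDist σ φ j k) →
        A = (Finset.univ.filter fun k => 0 < mass σ φ k) ∧
          ∀ k ∈ A, w k = mass σ φ k ∧ ys k = condMarket σ φ k) ∧
      (¬ Set.InjOn (condMarket σ φ) {k : Fin K | 0 < mass σ φ k} →
        ¬ ∃ (A : Finset (Fin K)) (ys : Fin K → Fin K → ℝ) (w : Fin K → ℝ),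
            IsDirectSeg v xstar A ys w ∧
            ∀ j k, directJoint A ys w j k = jointDist σ φ j k) :=
  stmt14_general v xstar σ φ hσ
end

section
/- For every nonempty subset S ⊆ {1,…,K} there exists a unique market x such that x_j = 0 for all j ∉ S and v_i ∑_{j=i}^K x_j = v_{i'} ∑_{j=i'}^K x_j for all i, i' ∈ S. -/
/-!
Write `T_i(x) = ∑_{j ≥ i} x_j` for the tail sums and `a = min S`. For a market supported in `S`,
`T_a = 1`, so equal revenues on `S` force `T_i = v_a / v_i` for every `i ∈ S`; a vector supported
in `S` is determined by its tail sums at the points of `S` (look at the largest index where two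
such vectors differ), which gives uniqueness. Conversely, putting mass
`v_a (1 / v_s - 1 / v_{s'})` on each `s ∈ S`, where `s'` is the next element of `S` (and
`1 / v_{s'} = 0` for `s = max S`), produces these tail sums, and the masses are nonnegative
because `v` is increasing.
-/

open Finset

section TailSums

variable {ι M : Type*} [LinearOrder ι] [LocallyFiniteOrderTop ι] [AddCommGroup M]

theorem eq_of_forall_mem_sum_Ici_eq {S : Finset ι} {x y : ι → M}
    (hx : ∀ j ∉ S, x j = 0) (hy : ∀ j ∉ S, y j = 0)
    (h : ∀ i ∈ S, ∑ j ∈ Ici i, x j = ∑ j ∈ Ici i, y j) : x = y := by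
  classical
  have hmemS : ∀ j, x j ≠ y j → j ∈ S := fun j hj =>
    by_contra fun hjS => hj (by rw [hx j hjS, hy j hjS])
  by_contra hne
  obtain ⟨j₀, hj₀⟩ := Function.ne_iff.mp hne
  have hD : (S.filter fun j => x j ≠ y j).Nonempty := ⟨j₀, mem_filter.mpr ⟨hmemS j₀ hj₀, hj₀⟩⟩
  set m := (S.filter fun j => x j ≠ y j).max' hD
  obtain ⟨hmS, hm⟩ := mem_filter.mp (max'_mem _ hD)
  have htail : ∑ j ∈ Ici m, (x j - y j) = x m - y m := by
    refine sum_eq_single_of_mem m (mem_Ici.mpr le_rfl) fun j hj hjm => sub_eq_zero.mpr ?_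
    by_contra hxy
    have : j ≤ m := le_max' _ j (mem_filter.mpr ⟨hmemS j hxy, hxy⟩)
    exact hjm (le_antisymm this (mem_Ici.mp hj))
  exact hm (sub_eq_zero.mp (by rw [← htail, sum_sub_distrib, h m hmS, sub_self]))

theorem sum_Ici_min'_eq_sum [Fintype ι] {S : Finset ι} (hS : S.Nonempty) {x : ι → M}
    (hx : ∀ j ∉ S, x j = 0) : ∑ j ∈ Ici (S.min' hS), x j = ∑ j, x j :=
  sum_subset (subset_univ _) fun j _ hj =>
    hx j fun hjS => hj (mem_Ici.mpr (S.min'_le j hjS))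

end TailSums

theorem Fin.sum_Ici_sub_succ {M : Type*} [AddCommGroup M] {K : ℕ} (f : ℕ → M) (i : Fin K) :
    ∑ j ∈ Ici i, (f j - f (j + 1)) = f i - f K := by
  have h := sum_Ico_sub (fun n => -f n) i.isLt.le
  rw [← Fin.map_valEmbedding_Ici, sum_map] at h
  simpa [neg_add_eq_sub] using h

section CharMarket

variable {K : ℕ} {v : Fin K → ℝ} {S : Finset (Fin K)}

theorem sum_Ici_eq_div_of_isCharMarket (hv0 : ∀ k, v k ≠ 0) (hS : S.Nonempty) {x : Fin K → ℝ}
    (hx : IsCharMarket v S x) {i : Fin K} (hi : i ∈ S) :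
    ∑ j ∈ Ici i, x j = v (S.min' hS) / v i := by
  obtain ⟨⟨-, hsum⟩, hxS, hrev⟩ := hx
  have hmin : ∑ j ∈ Ici (S.min' hS), x j = 1 := by
    rw [sum_Ici_min'_eq_sum hS hxS, hsum]
  have := hrev i hi _ (S.min'_mem hS)
  rw [rev, rev, hmin, mul_one] at this
  rw [eq_div_iff (hv0 i), mul_comm, this]

variable (v S)

/-- Indexed by `ℕ` rather than `Fin K` so that the masses of `charMarket` telescope
(`Fin.sum_Ici_sub_succ`). -/
noncomputable def invValFrom (n : ℕ) : ℝ :=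
  if h : (S.filter fun i : Fin K => n ≤ (i : ℕ)).Nonempty then (v ((S.filter _).min' h))⁻¹ else 0

noncomputable def charMarket (hS : S.Nonempty) (j : Fin K) : ℝ :=
  v (S.min' hS) * (invValFrom v S j - invValFrom v S (j + 1))

variable {v S}

theorem invValFrom_of_mem {i : Fin K} (hi : i ∈ S) : invValFrom v S i = (v i)⁻¹ := by
  have h : (S.filter fun k : Fin K => (i : ℕ) ≤ k).Nonempty := ⟨i, mem_filter.mpr ⟨hi, le_rfl⟩⟩
  rw [invValFrom, dif_pos h]
  congr 2
  refine le_antisymm (min'_le _ _ (mem_filter.mpr ⟨hi, le_rfl⟩)) ?_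
  exact Fin.le_def.mpr (mem_filter.mp (min'_mem _ h)).2

theorem invValFrom_succ_of_notMem {j : Fin K} (hj : j ∉ S) :
    invValFrom v S (j + 1) = invValFrom v S j := by
  have : (S.filter fun i : Fin K => (j : ℕ) + 1 ≤ i) = S.filter fun i : Fin K => (j : ℕ) ≤ i := by
    refine filter_congr fun i hi => ⟨fun h => by omega, fun h => ?_⟩
    rcases h.lt_or_eq with h | h
    · exact h
    · exact absurd (Fin.ext h ▸ hi) hj
  simp only [invValFrom, this]

theorem invValFrom_eq_zero_of_le {n : ℕ} (hn : K ≤ n) : invValFrom v S n = 0 := by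
  rw [invValFrom, dif_neg]
  rintro ⟨i, hi⟩
  have := (mem_filter.mp hi).2
  omega

theorem antitone_invValFrom (hv0 : ∀ k, 0 < v k) (hv : Monotone v) :
    Antitone (invValFrom v S) := by
  intro m n hmn
  by_cases h : (S.filter fun i : Fin K => n ≤ (i : ℕ)).Nonempty
  · have hsub : (S.filter fun i : Fin K => n ≤ (i : ℕ)) ⊆ S.filter fun i : Fin K => m ≤ (i : ℕ) :=
      monotone_filter_right _ fun _ _ hi => hmn.trans hi
    rw [invValFrom, invValFrom, dif_pos h, dif_pos (h.mono hsub)]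
    exact inv_anti₀ (hv0 _) (hv (min'_subset _ hsub))
  · rw [invValFrom, dif_neg h, invValFrom]
    split_ifs
    exacts [inv_nonneg.mpr (hv0 _).le, le_rfl]

theorem sum_Ici_charMarket (hS : S.Nonempty) {i : Fin K} (hi : i ∈ S) :
    ∑ j ∈ Ici i, charMarket v S hS j = v (S.min' hS) / v i := by
  simp only [charMarket, ← mul_sum, Fin.sum_Ici_sub_succ (invValFrom v S),
    invValFrom_of_mem hi, invValFrom_eq_zero_of_le le_rfl, sub_zero, div_eq_mul_inv]

theorem isCharMarket_charMarket (hv0 : ∀ k, 0 < v k) (hv : Monotone v) (hS : S.Nonempty) :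
    IsCharMarket v S (charMarket v S hS) := by
  have hnotMem : ∀ j ∉ S, charMarket v S hS j = 0 := fun j hj => by
    rw [charMarket, invValFrom_succ_of_notMem hj, sub_self, mul_zero]
  have hrev : ∀ i ∈ S, rev v (charMarket v S hS) i = v (S.min' hS) := fun i hi => by
    rw [rev, sum_Ici_charMarket hS hi, mul_div_cancel₀ _ (hv0 i).ne']
  refine ⟨⟨fun j => ?_, ?_⟩, hnotMem, fun i hi i' hi' => by rw [hrev i hi, hrev i' hi']⟩
  · exact mul_nonneg (hv0 _).le
      (sub_nonneg.mpr (antitone_invValFrom hv0 hv (Nat.le_succ _)))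
  · rw [← sum_Ici_min'_eq_sum hS hnotMem, sum_Ici_charMarket hS (S.min'_mem hS),
      div_self (hv0 _).ne']

end CharMarket

theorem stmt16_general {K : ℕ} (v : Fin K → ℝ)
    (hv0 : ∀ k, 0 < v k) (hv : StrictMono v)
    (S : Finset (Fin K)) (hS : S.Nonempty) :
    ∃! x : Fin K → ℝ, IsMarket K x ∧ (∀ j ∉ S, x j = 0) ∧
      ∀ i ∈ S, ∀ i' ∈ S, rev v x i = rev v x i' := by
  have hx := isCharMarket_charMarket hv0 hv.monotone hS
  refine ⟨charMarket v S hS, hx, fun y hy =>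
    eq_of_forall_mem_sum_Ici_eq hy.2.1 hx.2.1 fun i hi => ?_⟩
  rw [sum_Ici_eq_div_of_isCharMarket (fun k => (hv0 k).ne') hS hy hi, sum_Ici_charMarket hS hi]

theorem stmt16 {K : ℕ} (hK : 2 ≤ K) (v : Fin K → ℝ)
    (hv0 : ∀ k, 0 < v k) (hv : StrictMono v)
    (S : Finset (Fin K)) (hS : S.Nonempty) :
    ∃! x : Fin K → ℝ, IsMarket K x ∧ (∀ j ∉ S, x j = 0) ∧
      ∀ i ∈ S, ∀ i' ∈ S, rev v x i = rev v x i' :=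
  stmt16_general v hv0 hv S hS
end
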